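/- On Minkowski ℝ⁴, let R be a smooth (0,4)-tensor field having Riemann symmetries at every point and satisfying the second Bianchi identity ∂_{[ν} R_{αβ]λμ} = 0 everywhere, and let B be its pointwise Bel tensor. If the matter current J_{λμβ} = ∂_λ Ric_{μβ} − ∂_μ Ric_{λβ} vanishes identically, where Ric_{μβ} = η^{αλ} R_{αμλβ}, then the Bel tensor is divergence-free: ∂_α B^{αβλμ} = 0 everywhere. -/

import Mathlib

noncomputable section

/-- The `ν`-th coordinate vector of ℝ⁴. -/
def coordV (ν : Fin 4) : Fin 4 → ℝ := Pi.single ν 1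

/-- The coordinate partial derivative `∂_ν f` at `p`. -/
def pd (ν : Fin 4) (f : (Fin 4 → ℝ) → ℝ) (p : Fin 4 → ℝ) : ℝ :=
  fderiv ℝ f p (coordV ν)

/-- The Minkowski metric `η = diag(1, −1, −1, −1)` on ℝ⁴ (its own inverse,
so it is also used to raise indices). -/
def mink (μ ν : Fin 4) : ℝ := if μ = ν then (if μ = 0 then 1 else -1) else 0

/-- A (0,4)-tensor (components) has the Riemann symmetries: antisymmetry in the
first pair, antisymmetry in the second pair, symmetry under interchange of the
two pairs, and the first Bianchi identity `R_{α[βλμ]} = 0` (equivalent, given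
the other symmetries, to the cyclic identity). -/
def RiemannSym (R : Fin 4 → Fin 4 → Fin 4 → Fin 4 → ℝ) : Prop :=
  (∀ α β lam μ, R α β lam μ = - R β α lam μ) ∧
  (∀ α β lam μ, R α β lam μ = - R α β μ lam) ∧
  (∀ α β lam μ, R α β lam μ = R lam μ α β) ∧
  (∀ α β lam μ, R α β lam μ + R α lam μ β + R α μ β lam = 0)

/-- The second Bianchi identity `∂_{[ν} R_{αβ]λμ} = 0` (antisymmetrization over
the three indices `ν, α, β`) for a (0,4)-tensor field `R` on Minkowski ℝ⁴. -/
def SecondBianchi (R : (Fin 4 → ℝ) → Fin 4 → Fin 4 → Fin 4 → Fin 4 → ℝ) : Prop :=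
  ∀ p ν α β lam μ,
    (1/6 : ℝ) *
      (pd ν (fun q => R q α β lam μ) p + pd α (fun q => R q β ν lam μ) p
        + pd β (fun q => R q ν α lam μ) p - pd ν (fun q => R q β α lam μ) p
        - pd α (fun q => R q ν β lam μ) p - pd β (fun q => R q α ν lam μ) p) = 0

/-- The (pointwise) Bel tensor of a (0,4)-tensor `R`, built with the Minkowski
metric `η` (which is its own inverse, so indices are raised with `mink`):
`B_{αβλμ} = R_{αρλσ}R_β{}^ρ{}_μ{}^σ + R_{αρμσ}R_β{}^ρ{}_λ{}^σ
 − (1/2) η_{αβ} R_{ρτλσ}R^{ρτ}{}_μ{}^σ − (1/2) η_{λμ} R_{αρστ}R_β{}^{ρστ}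
 + (1/8) η_{αβ} η_{λμ} R_{ρτσν}R^{ρτσν}`. -/
def Bel (R : Fin 4 → Fin 4 → Fin 4 → Fin 4 → ℝ) (α β lam μ : Fin 4) : ℝ :=
    (∑ ρ, ∑ σ, ∑ ρ', ∑ σ', R α ρ lam σ * mink ρ ρ' * mink σ σ' * R β ρ' μ σ')
  + (∑ ρ, ∑ σ, ∑ ρ', ∑ σ', R α ρ μ σ * mink ρ ρ' * mink σ σ' * R β ρ' lam σ')
  - (1/2) * mink α β * (∑ ρ, ∑ τ, ∑ σ, ∑ ρ', ∑ τ', ∑ σ',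
      mink ρ ρ' * mink τ τ' * mink σ σ' * R ρ τ lam σ * R ρ' τ' μ σ')
  - (1/2) * mink lam μ * (∑ ρ, ∑ σ, ∑ τ, ∑ ρ', ∑ σ', ∑ τ',
      mink ρ ρ' * mink σ σ' * mink τ τ' * R α ρ σ τ * R β ρ' σ' τ')
  + (1/8) * mink α β * mink lam μ * (∑ ρ, ∑ τ, ∑ σ, ∑ ν, ∑ ρ', ∑ τ', ∑ σ', ∑ ν',
      mink ρ ρ' * mink τ τ' * mink σ σ' * mink ν ν' * R ρ τ σ ν * R ρ' τ' σ' ν')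

/-- The Bel tensor of `R` with all four indices raised with `η`. -/
def belUp (R : (Fin 4 → ℝ) → Fin 4 → Fin 4 → Fin 4 → Fin 4 → ℝ)
    (q : Fin 4 → ℝ) (α β lam μ : Fin 4) : ℝ :=
  ∑ α', ∑ β', ∑ lam', ∑ μ',
    mink α α' * mink β β' * mink lam lam' * mink μ μ' * Bel (R q) α' β' lam' μ'

/-- The divergence `∂_α B^{αβλμ}` of the Bel tensor of `R`. -/
def divBel (R : (Fin 4 → ℝ) → Fin 4 → Fin 4 → Fin 4 → Fin 4 → ℝ)
    (p : Fin 4 → ℝ) (β lam μ : Fin 4) : ℝ :=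
  ∑ α, pd α (fun q => belUp R q α β lam μ) p

/-- The Ricci trace of `R`: `Ric_{μβ} = η^{αλ} R_{αμλβ}`. -/
def ricci (R : (Fin 4 → ℝ) → Fin 4 → Fin 4 → Fin 4 → Fin 4 → ℝ)
    (q : Fin 4 → ℝ) (μ β : Fin 4) : ℝ :=
  ∑ α, ∑ lam, mink α lam * R q α μ lam β

/-- The matter current `J_{λμβ} = ∂_λ Ric_{μβ} − ∂_μ Ric_{λβ}`. -/
def matJ (R : (Fin 4 → ℝ) → Fin 4 → Fin 4 → Fin 4 → Fin 4 → ℝ)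
    (p : Fin 4 → ℝ) (lam μ β : Fin 4) : ℝ :=
  pd lam (fun q => ricci R q μ β) p - pd μ (fun q => ricci R q lam β) p

-- ===== auxiliary definitions and lemmas =====

def eps (i : Fin 4) : ℝ := if i = 0 then 1 else -1

lemma mink_diag (i : Fin 4) : mink i i = eps i := by simp [mink, eps]

lemma sum_mink (x : Fin 4) (f : Fin 4 → ℝ) :
    ∑ j, mink x j * f j = eps x * f x := by
  rw [Finset.sum_eq_single x]
  · rw [mink_diag]
  · intro b _ hb
    have hxb : ¬ x = b := fun h => hb h.symm
    simp [mink, hxb]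
  · simp

lemma col2 (x y : Fin 4) (g : Fin 4 → Fin 4 → ℝ) :
    (∑ i, ∑ j, mink x i * mink y j * g i j) = eps x * (eps y * g x y) := by
  have h : ∀ i, (∑ j, mink x i * mink y j * g i j) = mink x i * ∑ j, mink y j * g i j := by
    intro i; rw [Finset.mul_sum]; exact Finset.sum_congr rfl fun j _ => by ring
  calc (∑ i, ∑ j, mink x i * mink y j * g i j)
      = ∑ i, mink x i * (eps y * g i y) := by
        refine Finset.sum_congr rfl fun i _ => ?_; rw [h i, sum_mink]
    _ = eps x * (eps y * g x y) := sum_mink x _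

lemma col3 (x y z : Fin 4) (g : Fin 4 → Fin 4 → Fin 4 → ℝ) :
    (∑ i, ∑ j, ∑ k, mink x i * mink y j * mink z k * g i j k)
      = eps x * (eps y * (eps z * g x y z)) := by
  have h : ∀ i, (∑ j, ∑ k, mink x i * mink y j * mink z k * g i j k)
      = mink x i * ∑ j, ∑ k, mink y j * mink z k * g i j k := by
    intro i
    rw [Finset.mul_sum]
    refine Finset.sum_congr rfl fun j _ => ?_
    rw [Finset.mul_sum]; exact Finset.sum_congr rfl fun k _ => by ring
  calc (∑ i, ∑ j, ∑ k, mink x i * mink y j * mink z k * g i j k)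
      = ∑ i, mink x i * (eps y * (eps z * g i y z)) := by
        refine Finset.sum_congr rfl fun i _ => ?_; rw [h i, col2]
    _ = eps x * (eps y * (eps z * g x y z)) := sum_mink x _

lemma col4 (x y z w : Fin 4) (g : Fin 4 → Fin 4 → Fin 4 → Fin 4 → ℝ) :
    (∑ i, ∑ j, ∑ k, ∑ l, mink x i * mink y j * mink z k * mink w l * g i j k l)
      = eps x * (eps y * (eps z * (eps w * g x y z w))) := by
  have h : ∀ i, (∑ j, ∑ k, ∑ l, mink x i * mink y j * mink z k * mink w l * g i j k l)
      = mink x i * ∑ j, ∑ k, ∑ l, mink y j * mink z k * mink w l * g i j k l := by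
    intro i
    rw [Finset.mul_sum]
    refine Finset.sum_congr rfl fun j _ => ?_
    rw [Finset.mul_sum]
    refine Finset.sum_congr rfl fun k _ => ?_
    rw [Finset.mul_sum]; exact Finset.sum_congr rfl fun l _ => by ring
  calc (∑ i, ∑ j, ∑ k, ∑ l, mink x i * mink y j * mink z k * mink w l * g i j k l)
      = ∑ i, mink x i * (eps y * (eps z * (eps w * g i y z w))) := by
        refine Finset.sum_congr rfl fun i _ => ?_; rw [h i, col3]
    _ = eps x * (eps y * (eps z * (eps w * g x y z w))) := sum_mink x _

lemma Bel_eps (T : Fin 4 → Fin 4 → Fin 4 → Fin 4 → ℝ) (a b c d : Fin 4) :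
    Bel T a b c d =
      (∑ ρ, ∑ σ, eps ρ * (eps σ * (T a ρ c σ * T b ρ d σ)))
    + (∑ ρ, ∑ σ, eps ρ * (eps σ * (T a ρ d σ * T b ρ c σ)))
    - (1/2) * mink a b * (∑ ρ, ∑ τ, ∑ σ, eps ρ * (eps τ * (eps σ * (T ρ τ c σ * T ρ τ d σ))))
    - (1/2) * mink c d * (∑ ρ, ∑ σ, ∑ τ, eps ρ * (eps σ * (eps τ * (T a ρ σ τ * T b ρ σ τ))))
    + (1/8) * mink a b * mink c d *
        (∑ ρ, ∑ τ, ∑ σ, ∑ w, eps ρ * (eps τ * (eps σ * (eps w * (T ρ τ σ w * T ρ τ σ w))))) := by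
  unfold Bel
  congr 1; congr 1; congr 1; congr 1
  · refine Finset.sum_congr rfl fun ρ _ => Finset.sum_congr rfl fun σ _ => ?_
    calc (∑ ρ', ∑ σ', T a ρ c σ * mink ρ ρ' * mink σ σ' * T b ρ' d σ')
        = ∑ ρ', ∑ σ', mink ρ ρ' * mink σ σ' * (T a ρ c σ * T b ρ' d σ') := by
          exact Finset.sum_congr rfl fun ρ' _ => Finset.sum_congr rfl fun σ' _ => by ring
      _ = eps ρ * (eps σ * (T a ρ c σ * T b ρ d σ)) := col2 ρ σ _
  · refine Finset.sum_congr rfl fun ρ _ => Finset.sum_congr rfl fun σ _ => ?_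
    calc (∑ ρ', ∑ σ', T a ρ d σ * mink ρ ρ' * mink σ σ' * T b ρ' c σ')
        = ∑ ρ', ∑ σ', mink ρ ρ' * mink σ σ' * (T a ρ d σ * T b ρ' c σ') := by
          exact Finset.sum_congr rfl fun ρ' _ => Finset.sum_congr rfl fun σ' _ => by ring
      _ = eps ρ * (eps σ * (T a ρ d σ * T b ρ c σ)) := col2 ρ σ _
  · congr 1
    refine Finset.sum_congr rfl fun ρ _ => Finset.sum_congr rfl fun τ _ =>
      Finset.sum_congr rfl fun σ _ => ?_
    calc (∑ ρ', ∑ τ', ∑ σ', mink ρ ρ' * mink τ τ' * mink σ σ' * T ρ τ c σ * T ρ' τ' d σ')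
        = ∑ ρ', ∑ τ', ∑ σ', mink ρ ρ' * mink τ τ' * mink σ σ' * (T ρ τ c σ * T ρ' τ' d σ') := by
          exact Finset.sum_congr rfl fun ρ' _ => Finset.sum_congr rfl fun τ' _ =>
            Finset.sum_congr rfl fun σ' _ => by ring
      _ = eps ρ * (eps τ * (eps σ * (T ρ τ c σ * T ρ τ d σ))) := col3 ρ τ σ _
  · congr 1
    refine Finset.sum_congr rfl fun ρ _ => Finset.sum_congr rfl fun σ _ =>
      Finset.sum_congr rfl fun τ _ => ?_
    calc (∑ ρ', ∑ σ', ∑ τ', mink ρ ρ' * mink σ σ' * mink τ τ' * T a ρ σ τ * T b ρ' σ' τ')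
        = ∑ ρ', ∑ σ', ∑ τ', mink ρ ρ' * mink σ σ' * mink τ τ' * (T a ρ σ τ * T b ρ' σ' τ') := by
          exact Finset.sum_congr rfl fun ρ' _ => Finset.sum_congr rfl fun σ' _ =>
            Finset.sum_congr rfl fun τ' _ => by ring
      _ = eps ρ * (eps σ * (eps τ * (T a ρ σ τ * T b ρ σ τ))) := col3 ρ σ τ _
  · congr 1
    refine Finset.sum_congr rfl fun ρ _ => Finset.sum_congr rfl fun τ _ =>
      Finset.sum_congr rfl fun σ _ => Finset.sum_congr rfl fun w _ => ?_
    calc (∑ ρ', ∑ τ', ∑ σ', ∑ w', mink ρ ρ' * mink τ τ' * mink σ σ' * mink w w' * T ρ τ σ w * T ρ' τ' σ' w')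
        = ∑ ρ', ∑ τ', ∑ σ', ∑ w', mink ρ ρ' * mink τ τ' * mink σ σ' * mink w w' * (T ρ τ σ w * T ρ' τ' σ' w') := by
          exact Finset.sum_congr rfl fun ρ' _ => Finset.sum_congr rfl fun τ' _ =>
            Finset.sum_congr rfl fun σ' _ => Finset.sum_congr rfl fun w' _ => by ring
      _ = eps ρ * (eps τ * (eps σ * (eps w * (T ρ τ σ w * T ρ τ σ w)))) := col4 ρ τ σ w _


lemma pd_add {f g : (Fin 4 → ℝ) → ℝ} {p : Fin 4 → ℝ} (ν : Fin 4)
    (hf : DifferentiableAt ℝ f p) (hg : DifferentiableAt ℝ g p) :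
    pd ν (fun q => f q + g q) p = pd ν f p + pd ν g p := by
  simp [pd, fderiv_fun_add hf hg]

lemma pd_sub {f g : (Fin 4 → ℝ) → ℝ} {p : Fin 4 → ℝ} (ν : Fin 4)
    (hf : DifferentiableAt ℝ f p) (hg : DifferentiableAt ℝ g p) :
    pd ν (fun q => f q - g q) p = pd ν f p - pd ν g p := by
  simp [pd, fderiv_fun_sub hf hg]

lemma pd_neg {f : (Fin 4 → ℝ) → ℝ} {p : Fin 4 → ℝ} (ν : Fin 4) :
    pd ν (fun q => -f q) p = - pd ν f p := by
  simp [pd, fderiv_neg]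

lemma pd_const_mul {f : (Fin 4 → ℝ) → ℝ} {p : Fin 4 → ℝ} (ν : Fin 4) (c : ℝ)
    (hf : DifferentiableAt ℝ f p) :
    pd ν (fun q => c * f q) p = c * pd ν f p := by
  simp [pd, fderiv_const_mul hf c]

lemma pd_mul {f g : (Fin 4 → ℝ) → ℝ} {p : Fin 4 → ℝ} (ν : Fin 4)
    (hf : DifferentiableAt ℝ f p) (hg : DifferentiableAt ℝ g p) :
    pd ν (fun q => f q * g q) p = pd ν f p * g p + f p * pd ν g p := by
  simp [pd, fderiv_fun_mul hf hg]; ring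

lemma pd_sum {ι : Type*} (s : Finset ι) (f : ι → (Fin 4 → ℝ) → ℝ) {p : Fin 4 → ℝ} (ν : Fin 4)
    (h : ∀ i ∈ s, DifferentiableAt ℝ (f i) p) :
    pd ν (fun q => ∑ i ∈ s, f i q) p = ∑ i ∈ s, pd ν (f i) p := by
  simp [pd, fderiv_fun_sum h]

section families

variable {p : Fin 4 → ℝ}

lemma dA2 (u v : Fin 4 → Fin 4 → (Fin 4 → ℝ) → ℝ)
    (hu : ∀ i j, DifferentiableAt ℝ (u i j) p) (hv : ∀ i j, DifferentiableAt ℝ (v i j) p) :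
    DifferentiableAt ℝ (fun q => ∑ i, ∑ j, eps i * (eps j * (u i j q * v i j q))) p :=
  DifferentiableAt.fun_sum fun i _ => DifferentiableAt.fun_sum fun j _ =>
    (((hu i j).mul (hv i j)).const_mul (eps j)).const_mul (eps i)

lemma dA3 (u v : Fin 4 → Fin 4 → Fin 4 → (Fin 4 → ℝ) → ℝ)
    (hu : ∀ i j k, DifferentiableAt ℝ (u i j k) p) (hv : ∀ i j k, DifferentiableAt ℝ (v i j k) p) :
    DifferentiableAt ℝ
      (fun q => ∑ i, ∑ j, ∑ k, eps i * (eps j * (eps k * (u i j k q * v i j k q)))) p :=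
  DifferentiableAt.fun_sum fun i _ => DifferentiableAt.fun_sum fun j _ => DifferentiableAt.fun_sum fun k _ =>
    ((((hu i j k).mul (hv i j k)).const_mul (eps k)).const_mul (eps j)).const_mul (eps i)

lemma dA4 (u v : Fin 4 → Fin 4 → Fin 4 → Fin 4 → (Fin 4 → ℝ) → ℝ)
    (hu : ∀ i j k l, DifferentiableAt ℝ (u i j k l) p)
    (hv : ∀ i j k l, DifferentiableAt ℝ (v i j k l) p) :
    DifferentiableAt ℝ
      (fun q => ∑ i, ∑ j, ∑ k, ∑ l,
        eps i * (eps j * (eps k * (eps l * (u i j k l q * v i j k l q))))) p :=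
  DifferentiableAt.fun_sum fun i _ => DifferentiableAt.fun_sum fun j _ => DifferentiableAt.fun_sum fun k _ =>
    DifferentiableAt.fun_sum fun l _ =>
      (((((hu i j k l).mul (hv i j k l)).const_mul (eps l)).const_mul
        (eps k)).const_mul (eps j)).const_mul (eps i)

lemma pdA2 (ν : Fin 4) (u v : Fin 4 → Fin 4 → (Fin 4 → ℝ) → ℝ)
    (hu : ∀ i j, DifferentiableAt ℝ (u i j) p) (hv : ∀ i j, DifferentiableAt ℝ (v i j) p) :
    pd ν (fun q => ∑ i, ∑ j, eps i * (eps j * (u i j q * v i j q))) p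
      = ∑ i, ∑ j, eps i * (eps j * (pd ν (u i j) p * v i j p + u i j p * pd ν (v i j) p)) := by
  rw [pd_sum Finset.univ
    (fun i => fun q => ∑ j, eps i * (eps j * (u i j q * v i j q))) ν
    (fun i _ => DifferentiableAt.fun_sum fun j _ =>
      (((hu i j).mul (hv i j)).const_mul (eps j)).const_mul (eps i))]
  refine Finset.sum_congr rfl fun i _ => ?_
  rw [pd_sum Finset.univ (fun j => fun q => eps i * (eps j * (u i j q * v i j q))) ν
    (fun j _ => (((hu i j).mul (hv i j)).const_mul (eps j)).const_mul (eps i))]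
  refine Finset.sum_congr rfl fun j _ => ?_
  rw [pd_const_mul ν (eps i) (((hu i j).fun_mul (hv i j)).const_mul (eps j)),
    pd_const_mul ν (eps j) ((hu i j).fun_mul (hv i j)),
    pd_mul ν (hu i j) (hv i j)]

lemma pdA3 (ν : Fin 4) (u v : Fin 4 → Fin 4 → Fin 4 → (Fin 4 → ℝ) → ℝ)
    (hu : ∀ i j k, DifferentiableAt ℝ (u i j k) p) (hv : ∀ i j k, DifferentiableAt ℝ (v i j k) p) :
    pd ν (fun q => ∑ i, ∑ j, ∑ k, eps i * (eps j * (eps k * (u i j k q * v i j k q)))) p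
      = ∑ i, ∑ j, ∑ k, eps i * (eps j * (eps k *
          (pd ν (u i j k) p * v i j k p + u i j k p * pd ν (v i j k) p))) := by
  rw [pd_sum Finset.univ
    (fun i => fun q => ∑ j, ∑ k, eps i * (eps j * (eps k * (u i j k q * v i j k q)))) ν
    (fun i _ => DifferentiableAt.fun_sum fun j _ => DifferentiableAt.fun_sum fun k _ =>
      ((((hu i j k).mul (hv i j k)).const_mul (eps k)).const_mul (eps j)).const_mul (eps i))]
  refine Finset.sum_congr rfl fun i _ => ?_
  rw [pd_sum Finset.univ
    (fun j => fun q => ∑ k, eps i * (eps j * (eps k * (u i j k q * v i j k q)))) ν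
    (fun j _ => DifferentiableAt.fun_sum fun k _ =>
      ((((hu i j k).mul (hv i j k)).const_mul (eps k)).const_mul (eps j)).const_mul (eps i))]
  refine Finset.sum_congr rfl fun j _ => ?_
  rw [pd_sum Finset.univ
    (fun k => fun q => eps i * (eps j * (eps k * (u i j k q * v i j k q)))) ν
    (fun k _ =>
      ((((hu i j k).mul (hv i j k)).const_mul (eps k)).const_mul (eps j)).const_mul (eps i))]
  refine Finset.sum_congr rfl fun k _ => ?_
  rw [pd_const_mul ν (eps i) ((((hu i j k).fun_mul (hv i j k)).const_mul (eps k)).const_mul (eps j)),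
    pd_const_mul ν (eps j) (((hu i j k).fun_mul (hv i j k)).const_mul (eps k)),
    pd_const_mul ν (eps k) ((hu i j k).fun_mul (hv i j k)),
    pd_mul ν (hu i j k) (hv i j k)]

lemma pdA4 (ν : Fin 4) (u v : Fin 4 → Fin 4 → Fin 4 → Fin 4 → (Fin 4 → ℝ) → ℝ)
    (hu : ∀ i j k l, DifferentiableAt ℝ (u i j k l) p)
    (hv : ∀ i j k l, DifferentiableAt ℝ (v i j k l) p) :
    pd ν (fun q => ∑ i, ∑ j, ∑ k, ∑ l,
        eps i * (eps j * (eps k * (eps l * (u i j k l q * v i j k l q))))) p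
      = ∑ i, ∑ j, ∑ k, ∑ l, eps i * (eps j * (eps k * (eps l *
          (pd ν (u i j k l) p * v i j k l p + u i j k l p * pd ν (v i j k l) p)))) := by
  rw [pd_sum Finset.univ
    (fun i => fun q => ∑ j, ∑ k, ∑ l,
      eps i * (eps j * (eps k * (eps l * (u i j k l q * v i j k l q))))) ν
    (fun i _ => DifferentiableAt.fun_sum fun j _ => DifferentiableAt.fun_sum fun k _ =>
      DifferentiableAt.fun_sum fun l _ =>
      (((((hu i j k l).mul (hv i j k l)).const_mul (eps l)).const_mul (eps k)).const_mul
        (eps j)).const_mul (eps i))]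
  refine Finset.sum_congr rfl fun i _ => ?_
  rw [pd_sum Finset.univ
    (fun j => fun q => ∑ k, ∑ l,
      eps i * (eps j * (eps k * (eps l * (u i j k l q * v i j k l q))))) ν
    (fun j _ => DifferentiableAt.fun_sum fun k _ => DifferentiableAt.fun_sum fun l _ =>
      (((((hu i j k l).mul (hv i j k l)).const_mul (eps l)).const_mul (eps k)).const_mul
        (eps j)).const_mul (eps i))]
  refine Finset.sum_congr rfl fun j _ => ?_
  rw [pd_sum Finset.univ
    (fun k => fun q => ∑ l,
      eps i * (eps j * (eps k * (eps l * (u i j k l q * v i j k l q))))) ν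
    (fun k _ => DifferentiableAt.fun_sum fun l _ =>
      (((((hu i j k l).mul (hv i j k l)).const_mul (eps l)).const_mul (eps k)).const_mul
        (eps j)).const_mul (eps i))]
  refine Finset.sum_congr rfl fun k _ => ?_
  rw [pd_sum Finset.univ
    (fun l => fun q => eps i * (eps j * (eps k * (eps l * (u i j k l q * v i j k l q))))) ν
    (fun l _ =>
      (((((hu i j k l).mul (hv i j k l)).const_mul (eps l)).const_mul (eps k)).const_mul
        (eps j)).const_mul (eps i))]
  refine Finset.sum_congr rfl fun l _ => ?_
  rw [pd_const_mul ν (eps i)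
      (((((hu i j k l).fun_mul (hv i j k l)).const_mul (eps l)).const_mul (eps k)).const_mul (eps j)),
    pd_const_mul ν (eps j)
      (((((hu i j k l).fun_mul (hv i j k l)).const_mul (eps l))).const_mul (eps k)),
    pd_const_mul ν (eps k) (((hu i j k l).fun_mul (hv i j k l)).const_mul (eps l)),
    pd_const_mul ν (eps l) ((hu i j k l).fun_mul (hv i j k l)),
    pd_mul ν (hu i j k l) (hv i j k l)]

end families


lemma eps_sq (i : Fin 4) : eps i * eps i = 1 := by unfold eps; split_ifs <;> norm_num

section helpers

lemma sum2_congr {f g : Fin 4 → Fin 4 → ℝ} (h : ∀ a b, f a b = g a b) :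
    (∑ a, ∑ b, f a b) = ∑ a, ∑ b, g a b :=
  Finset.sum_congr rfl fun a _ => Finset.sum_congr rfl fun b _ => h a b

lemma sum3_congr {f g : Fin 4 → Fin 4 → Fin 4 → ℝ} (h : ∀ a b c, f a b c = g a b c) :
    (∑ a, ∑ b, ∑ c, f a b c) = ∑ a, ∑ b, ∑ c, g a b c :=
  Finset.sum_congr rfl fun a _ => Finset.sum_congr rfl fun b _ =>
    Finset.sum_congr rfl fun c _ => h a b c

lemma sum4_congr {f g : Fin 4 → Fin 4 → Fin 4 → Fin 4 → ℝ} (h : ∀ a b c d, f a b c d = g a b c d) :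
    (∑ a, ∑ b, ∑ c, ∑ d, f a b c d) = ∑ a, ∑ b, ∑ c, ∑ d, g a b c d :=
  Finset.sum_congr rfl fun a _ => Finset.sum_congr rfl fun b _ =>
    Finset.sum_congr rfl fun c _ => Finset.sum_congr rfl fun d _ => h a b c d

/-- swap the first two summation indices of a triple sum -/
lemma sum3_swap (f : Fin 4 → Fin 4 → Fin 4 → ℝ) :
    (∑ a, ∑ b, ∑ c, f a b c) = ∑ a, ∑ b, ∑ c, f b a c :=
  Finset.sum_comm

/-- swap the first two summation indices of a quadruple sum -/
lemma sum4_swap (f : Fin 4 → Fin 4 → Fin 4 → Fin 4 → ℝ) :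
    (∑ a, ∑ b, ∑ c, ∑ d, f a b c d) = ∑ a, ∑ b, ∑ c, ∑ d, f b a c d :=
  Finset.sum_comm

/-- rotate the outer summation index of a triple sum to the inside -/
lemma sum3_rot (f : Fin 4 → Fin 4 → Fin 4 → ℝ) :
    (∑ a, ∑ b, ∑ c, f a b c) = ∑ b, ∑ c, ∑ a, f a b c := by
  rw [Finset.sum_comm]
  exact Finset.sum_congr rfl fun b _ => Finset.sum_comm

/-- rotate the outer summation index of a quadruple sum to the inside -/
lemma sum4_rot (f : Fin 4 → Fin 4 → Fin 4 → Fin 4 → ℝ) :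
    (∑ a, ∑ b, ∑ c, ∑ d, f a b c d) = ∑ b, ∑ c, ∑ d, ∑ a, f a b c d := by
  rw [Finset.sum_comm]
  refine Finset.sum_congr rfl fun b _ => ?_
  rw [Finset.sum_comm]
  exact Finset.sum_congr rfl fun c _ => Finset.sum_comm

lemma sum_eps_mink (b : Fin 4) (c : ℝ) (g : Fin 4 → ℝ) :
    ∑ α, eps α * (c * mink α b * g α) = c * g b := by
  rw [Finset.sum_eq_single b]
  · rw [mink_diag]
    calc eps b * (c * eps b * g b) = (eps b * eps b) * (c * g b) := by ring
      _ = c * g b := by rw [eps_sq]; ring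
  · intro a _ hab
    have : mink a b = 0 := by simp [mink, hab]
    rw [this]; ring
  · simp

end helpers

section algebra

variable (T : Fin 4 → Fin 4 → Fin 4 → Fin 4 → ℝ)
variable (D : Fin 4 → Fin 4 → Fin 4 → Fin 4 → Fin 4 → ℝ)

/-- contracted second Bianchi identity: the η-divergence on the 1st slot
(equivalently 3rd slot, after pair symmetry) vanishes when J = 0. -/
lemma div3 (hD1 : ∀ ν a b c d, D ν a b c d = - D ν b a c d)
    (hcyc : ∀ ν a b c d, D ν a b c d + D a b ν c d + D b ν a c d = 0)
    (hJ' : ∀ x y z, (∑ α, eps α * D x α y α z) = ∑ α, eps α * D y α x α z)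
    (x y z : Fin 4) :
    ∑ α, eps α * D α x y α z = 0 := by
  calc ∑ α, eps α * D α x y α z
      = ∑ α, (eps α * D x α y α z - eps α * D y α x α z) := by
        refine Finset.sum_congr rfl fun α _ => ?_
        linear_combination eps α * hcyc α x y α z - eps α * hD1 x y α α z
    _ = (∑ α, eps α * D x α y α z) - ∑ α, eps α * D y α x α z := Finset.sum_sub_distrib ..
    _ = 0 := by rw [hJ' x y z]; ring

lemma div1 (hD1 : ∀ ν a b c d, D ν a b c d = - D ν b a c d)
    (hD3 : ∀ ν a b c d, D ν a b c d = D ν c d a b)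
    (hcyc : ∀ ν a b c d, D ν a b c d + D a b ν c d + D b ν a c d = 0)
    (hJ' : ∀ x y z, (∑ α, eps α * D x α y α z) = ∑ α, eps α * D y α x α z)
    (x y z : Fin 4) :
    ∑ α, eps α * D α α x y z = 0 := by
  calc ∑ α, eps α * D α α x y z
      = ∑ α, eps α * D α y z α x := by
        refine Finset.sum_congr rfl fun α _ => ?_
        rw [hD3 α α x y z]
    _ = 0 := div3 D hD1 hcyc hJ' y z x

/-- key lemma (from the 2nd Bianchi identity): contracting `R` with the
divergence-index of `∂R` on the second slots turns into half a `∂_β` term. -/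
lemma keyLE (hT1 : ∀ a b c d, T a b c d = - T b a c d)
    (hD1 : ∀ ν a b c d, D ν a b c d = - D ν b a c d)
    (hcyc : ∀ ν a b c d, D ν a b c d + D a b ν c d + D b ν a c d = 0)
    (β x y : Fin 4) :
    2 * (∑ a, ∑ r, ∑ s, eps a * (eps r * (eps s * (T a r x s * D a β r y s))))
      = ∑ a, ∑ r, ∑ s, eps a * (eps r * (eps s * (T a r x s * D β a r y s))) := by
  have step1 : (∑ a, ∑ r, ∑ s, eps a * (eps r * (eps s * (T a r x s * D a β r y s))))
      = (∑ a, ∑ r, ∑ s, eps a * (eps r * (eps s * (T a r x s * D β a r y s))))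
        - ∑ a, ∑ r, ∑ s, eps a * (eps r * (eps s * (T a r x s * D r a β y s))) := by
    rw [← Finset.sum_sub_distrib]
    simp only [← Finset.sum_sub_distrib]
    refine sum3_congr fun a r s => ?_
    linear_combination (eps a * (eps r * (eps s * T a r x s))) * hcyc a β r y s
      - (eps a * (eps r * (eps s * T a r x s))) * hD1 β r a y s
  have step2 : (∑ a, ∑ r, ∑ s, eps a * (eps r * (eps s * (T a r x s * D r a β y s))))
      = ∑ a, ∑ r, ∑ s, eps a * (eps r * (eps s * (T a r x s * D a β r y s))) := by
    rw [sum3_swap]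
    refine sum3_congr fun a r s => ?_
    linear_combination (- (eps a * (eps r * (eps s * D a β r y s)))) * hT1 r a x s
      + (eps a * (eps r * (eps s * T r a x s))) * hD1 a r β y s
  linarith [step1, step2]

/-- the full-contraction version of `LE`. -/
lemma keyLF (hT1 : ∀ a b c d, T a b c d = - T b a c d)
    (hD1 : ∀ ν a b c d, D ν a b c d = - D ν b a c d)
    (hcyc : ∀ ν a b c d, D ν a b c d + D a b ν c d + D b ν a c d = 0)
    (β : Fin 4) :
    2 * (∑ a, ∑ r, ∑ s, ∑ t, eps a * (eps r * (eps s * (eps t * (T a r s t * D a β r s t)))))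
      = ∑ a, ∑ r, ∑ s, ∑ t, eps a * (eps r * (eps s * (eps t * (T a r s t * D β a r s t)))) := by
  have step1 : (∑ a, ∑ r, ∑ s, ∑ t, eps a * (eps r * (eps s * (eps t * (T a r s t * D a β r s t)))))
      = (∑ a, ∑ r, ∑ s, ∑ t, eps a * (eps r * (eps s * (eps t * (T a r s t * D β a r s t)))))
        - ∑ a, ∑ r, ∑ s, ∑ t, eps a * (eps r * (eps s * (eps t * (T a r s t * D r a β s t)))) := by
    rw [← Finset.sum_sub_distrib]
    simp only [← Finset.sum_sub_distrib]
    refine sum4_congr fun a r s t => ?_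
    linear_combination (eps a * (eps r * (eps s * (eps t * T a r s t)))) * hcyc a β r s t
      - (eps a * (eps r * (eps s * (eps t * T a r s t)))) * hD1 β r a s t
  have step2 : (∑ a, ∑ r, ∑ s, ∑ t, eps a * (eps r * (eps s * (eps t * (T a r s t * D r a β s t)))))
      = ∑ a, ∑ r, ∑ s, ∑ t, eps a * (eps r * (eps s * (eps t * (T a r s t * D a β r s t)))) := by
    rw [sum4_swap]
    refine sum4_congr fun a r s t => ?_
    linear_combination (- (eps a * (eps r * (eps s * (eps t * D a β r s t))))) * hT1 r a s t
      + (eps a * (eps r * (eps s * (eps t * T r a s t)))) * hD1 a r β s t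
  linarith [step1, step2]

end algebra

section algebra2

variable (T : Fin 4 → Fin 4 → Fin 4 → Fin 4 → ℝ)
variable (D : Fin 4 → Fin 4 → Fin 4 → Fin 4 → Fin 4 → ℝ)

lemma HA (hD1 : ∀ ν a b c d, D ν a b c d = - D ν b a c d)
    (hD3 : ∀ ν a b c d, D ν a b c d = D ν c d a b)
    (hcyc : ∀ ν a b c d, D ν a b c d + D a b ν c d + D b ν a c d = 0)
    (hJ' : ∀ x y z, (∑ α, eps α * D x α y α z) = ∑ α, eps α * D y α x α z)
    (β x y : Fin 4) :
    (∑ α, ∑ ρ, ∑ σ, eps α * (eps ρ * (eps σ * (D α α ρ x σ * T β ρ y σ)))) = 0 := by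
  rw [sum3_rot]
  refine Finset.sum_eq_zero fun ρ _ => Finset.sum_eq_zero fun σ _ => ?_
  calc (∑ α, eps α * (eps ρ * (eps σ * (D α α ρ x σ * T β ρ y σ))))
      = ∑ α, (eps ρ * (eps σ * T β ρ y σ)) * (eps α * D α α ρ x σ) :=
        Finset.sum_congr rfl fun α _ => by ring
    _ = (eps ρ * (eps σ * T β ρ y σ)) * ∑ α, eps α * D α α ρ x σ :=
        (Finset.mul_sum _ _ _).symm
    _ = 0 := by rw [div1 D hD1 hD3 hcyc hJ' ρ x σ]; ring

lemma HA4 (hD1 : ∀ ν a b c d, D ν a b c d = - D ν b a c d)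
    (hD3 : ∀ ν a b c d, D ν a b c d = D ν c d a b)
    (hcyc : ∀ ν a b c d, D ν a b c d + D a b ν c d + D b ν a c d = 0)
    (hJ' : ∀ x y z, (∑ α, eps α * D x α y α z) = ∑ α, eps α * D y α x α z)
    (β : Fin 4) :
    (∑ α, ∑ ρ, ∑ σ, ∑ τ, eps α * (eps ρ * (eps σ * (eps τ * (D α α ρ σ τ * T β ρ σ τ))))) = 0 := by
  rw [sum4_rot]
  refine Finset.sum_eq_zero fun ρ _ => Finset.sum_eq_zero fun σ _ =>
    Finset.sum_eq_zero fun τ _ => ?_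
  calc (∑ α, eps α * (eps ρ * (eps σ * (eps τ * (D α α ρ σ τ * T β ρ σ τ)))))
      = ∑ α, (eps ρ * (eps σ * (eps τ * T β ρ σ τ))) * (eps α * D α α ρ σ τ) :=
        Finset.sum_congr rfl fun α _ => by ring
    _ = (eps ρ * (eps σ * (eps τ * T β ρ σ τ))) * ∑ α, eps α * D α α ρ σ τ :=
        (Finset.mul_sum _ _ _).symm
    _ = 0 := by rw [div1 D hD1 hD3 hcyc hJ' ρ σ τ]; ring

lemma H1 (hT1 : ∀ a b c d, T a b c d = - T b a c d)
    (hD1 : ∀ ν a b c d, D ν a b c d = - D ν b a c d)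
    (hD3 : ∀ ν a b c d, D ν a b c d = D ν c d a b)
    (hcyc : ∀ ν a b c d, D ν a b c d + D a b ν c d + D b ν a c d = 0)
    (hJ' : ∀ x y z, (∑ α, eps α * D x α y α z) = ∑ α, eps α * D y α x α z)
    (β x y : Fin 4) :
    (∑ α, eps α * (∑ ρ, ∑ σ, eps ρ * (eps σ *
        (D α α ρ x σ * T β ρ y σ + T α ρ x σ * D α β ρ y σ))))
      = (1/2) * ∑ a, ∑ r, ∑ s, eps a * (eps r * (eps s * (T a r x s * D β a r y s))) := by
  have hsplit : (∑ α, eps α * (∑ ρ, ∑ σ, eps ρ * (eps σ *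
        (D α α ρ x σ * T β ρ y σ + T α ρ x σ * D α β ρ y σ))))
      = (∑ α, ∑ ρ, ∑ σ, eps α * (eps ρ * (eps σ * (D α α ρ x σ * T β ρ y σ))))
        + ∑ α, ∑ ρ, ∑ σ, eps α * (eps ρ * (eps σ * (T α ρ x σ * D α β ρ y σ))) := by
    simp only [Finset.mul_sum, mul_add, Finset.sum_add_distrib]
  rw [hsplit, HA T D hD1 hD3 hcyc hJ' β x y]
  have h2 := keyLE T D hT1 hD1 hcyc β x y
  linarith [h2]

lemma H3 (β x y : Fin 4) :
    (∑ α, eps α * (1/2 * mink α β * (∑ ρ, ∑ τ, ∑ σ, eps ρ * (eps τ * (eps σ *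
        (D α ρ τ x σ * T ρ τ y σ + T ρ τ x σ * D α ρ τ y σ))))))
      = (1/2) * (∑ a, ∑ r, ∑ s, eps a * (eps r * (eps s * (T a r y s * D β a r x s))))
        + (1/2) * (∑ a, ∑ r, ∑ s, eps a * (eps r * (eps s * (T a r x s * D β a r y s)))) := by
  rw [sum_eps_mink β (1/2) (fun ν => (∑ ρ, ∑ τ, ∑ σ, eps ρ * (eps τ * (eps σ *
        (D ν ρ τ x σ * T ρ τ y σ + T ρ τ x σ * D ν ρ τ y σ)))))]
  have hβ : (∑ ρ, ∑ τ, ∑ σ, eps ρ * (eps τ * (eps σ *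
        (D β ρ τ x σ * T ρ τ y σ + T ρ τ x σ * D β ρ τ y σ))))
      = (∑ a, ∑ r, ∑ s, eps a * (eps r * (eps s * (T a r y s * D β a r x s))))
        + ∑ a, ∑ r, ∑ s, eps a * (eps r * (eps s * (T a r x s * D β a r y s))) := by
    calc (∑ ρ, ∑ τ, ∑ σ, eps ρ * (eps τ * (eps σ *
          (D β ρ τ x σ * T ρ τ y σ + T ρ τ x σ * D β ρ τ y σ))))
        = ∑ ρ, ∑ τ, ∑ σ, (eps ρ * (eps τ * (eps σ * (T ρ τ y σ * D β ρ τ x σ)))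
            + eps ρ * (eps τ * (eps σ * (T ρ τ x σ * D β ρ τ y σ)))) :=
          sum3_congr fun ρ τ σ => by ring
      _ = _ := by simp only [Finset.sum_add_distrib]
  rw [hβ]; ring

lemma H4 (hT1 : ∀ a b c d, T a b c d = - T b a c d)
    (hD1 : ∀ ν a b c d, D ν a b c d = - D ν b a c d)
    (hD3 : ∀ ν a b c d, D ν a b c d = D ν c d a b)
    (hcyc : ∀ ν a b c d, D ν a b c d + D a b ν c d + D b ν a c d = 0)
    (hJ' : ∀ x y z, (∑ α, eps α * D x α y α z) = ∑ α, eps α * D y α x α z)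
    (β x y : Fin 4) :
    (∑ α, eps α * (1/2 * mink x y * (∑ ρ, ∑ σ, ∑ τ, eps ρ * (eps σ * (eps τ *
        (D α α ρ σ τ * T β ρ σ τ + T α ρ σ τ * D α β ρ σ τ))))))
      = (1/4) * mink x y * (∑ a, ∑ r, ∑ s, ∑ t, eps a * (eps r * (eps s * (eps t *
          (T a r s t * D β a r s t))))) := by
  have hpull : (∑ α, eps α * (1/2 * mink x y * (∑ ρ, ∑ σ, ∑ τ, eps ρ * (eps σ * (eps τ *
        (D α α ρ σ τ * T β ρ σ τ + T α ρ σ τ * D α β ρ σ τ))))))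
      = (1/2 * mink x y) * ∑ α, eps α * (∑ ρ, ∑ σ, ∑ τ, eps ρ * (eps σ * (eps τ *
        (D α α ρ σ τ * T β ρ σ τ + T α ρ σ τ * D α β ρ σ τ)))) := by
    rw [Finset.mul_sum]
    exact Finset.sum_congr rfl fun α _ => by ring
  rw [hpull]
  have hsplit : (∑ α, eps α * (∑ ρ, ∑ σ, ∑ τ, eps ρ * (eps σ * (eps τ *
        (D α α ρ σ τ * T β ρ σ τ + T α ρ σ τ * D α β ρ σ τ)))))
      = (∑ α, ∑ ρ, ∑ σ, ∑ τ, eps α * (eps ρ * (eps σ * (eps τ * (D α α ρ σ τ * T β ρ σ τ)))))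
        + ∑ α, ∑ ρ, ∑ σ, ∑ τ, eps α * (eps ρ * (eps σ * (eps τ * (T α ρ σ τ * D α β ρ σ τ)))) := by
    simp only [Finset.mul_sum, mul_add, Finset.sum_add_distrib]
  rw [hsplit, HA4 T D hD1 hD3 hcyc hJ' β]
  have h2 := keyLF T D hT1 hD1 hcyc β
  linear_combination (1/2 * mink x y) * h2 / 2 - h2 * 0

lemma H5 (β x y : Fin 4) :
    (∑ α, eps α * (1/8 * mink α β * mink x y * (∑ ρ, ∑ τ, ∑ σ, ∑ w, eps ρ * (eps τ * (eps σ * (eps w *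
        (D α ρ τ σ w * T ρ τ σ w + T ρ τ σ w * D α ρ τ σ w)))))))
      = (1/4) * mink x y * (∑ a, ∑ r, ∑ s, ∑ t, eps a * (eps r * (eps s * (eps t *
          (T a r s t * D β a r s t))))) := by
  have hre : (∑ α, eps α * (1/8 * mink α β * mink x y * (∑ ρ, ∑ τ, ∑ σ, ∑ w, eps ρ * (eps τ * (eps σ * (eps w *
        (D α ρ τ σ w * T ρ τ σ w + T ρ τ σ w * D α ρ τ σ w)))))))
      = ∑ α, eps α * ((1/8 * mink x y) * mink α β * (∑ ρ, ∑ τ, ∑ σ, ∑ w, eps ρ * (eps τ * (eps σ * (eps w *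
        (D α ρ τ σ w * T ρ τ σ w + T ρ τ σ w * D α ρ τ σ w)))))) :=
    Finset.sum_congr rfl fun α _ => by ring
  rw [hre, sum_eps_mink β (1/8 * mink x y) (fun ν => (∑ ρ, ∑ τ, ∑ σ, ∑ w, eps ρ * (eps τ * (eps σ * (eps w *
        (D ν ρ τ σ w * T ρ τ σ w + T ρ τ σ w * D ν ρ τ σ w))))))]
  have hβ : (∑ ρ, ∑ τ, ∑ σ, ∑ w, eps ρ * (eps τ * (eps σ * (eps w *
        (D β ρ τ σ w * T ρ τ σ w + T ρ τ σ w * D β ρ τ σ w)))))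
      = (∑ a, ∑ r, ∑ s, ∑ t, eps a * (eps r * (eps s * (eps t * (T a r s t * D β a r s t)))))
        + ∑ a, ∑ r, ∑ s, ∑ t, eps a * (eps r * (eps s * (eps t * (T a r s t * D β a r s t)))) := by
    calc (∑ ρ, ∑ τ, ∑ σ, ∑ w, eps ρ * (eps τ * (eps σ * (eps w *
          (D β ρ τ σ w * T ρ τ σ w + T ρ τ σ w * D β ρ τ σ w)))))
        = ∑ ρ, ∑ τ, ∑ σ, ∑ w, (eps ρ * (eps τ * (eps σ * (eps w * (T ρ τ σ w * D β ρ τ σ w))))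
            + eps ρ * (eps τ * (eps σ * (eps w * (T ρ τ σ w * D β ρ τ σ w))))) :=
          sum4_congr fun ρ τ σ w => by ring
      _ = _ := by simp only [Finset.sum_add_distrib]
  rw [hβ]; ring

end algebra2

def BelD (T : Fin 4 → Fin 4 → Fin 4 → Fin 4 → ℝ)
    (D : Fin 4 → Fin 4 → Fin 4 → Fin 4 → Fin 4 → ℝ) (ν a b c d : Fin 4) : ℝ :=
    (∑ ρ, ∑ σ, eps ρ * (eps σ * (D ν a ρ c σ * T b ρ d σ + T a ρ c σ * D ν b ρ d σ)))
  + (∑ ρ, ∑ σ, eps ρ * (eps σ * (D ν a ρ d σ * T b ρ c σ + T a ρ d σ * D ν b ρ c σ)))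
  - 1/2 * mink a b * (∑ ρ, ∑ τ, ∑ σ, eps ρ * (eps τ * (eps σ *
      (D ν ρ τ c σ * T ρ τ d σ + T ρ τ c σ * D ν ρ τ d σ))))
  - 1/2 * mink c d * (∑ ρ, ∑ σ, ∑ τ, eps ρ * (eps σ * (eps τ *
      (D ν a ρ σ τ * T b ρ σ τ + T a ρ σ τ * D ν b ρ σ τ))))
  + 1/8 * mink a b * mink c d * (∑ ρ, ∑ τ, ∑ σ, ∑ w, eps ρ * (eps τ * (eps σ * (eps w *
      (D ν ρ τ σ w * T ρ τ σ w + T ρ τ σ w * D ν ρ τ σ w)))))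

theorem core_zero (T : Fin 4 → Fin 4 → Fin 4 → Fin 4 → ℝ)
    (D : Fin 4 → Fin 4 → Fin 4 → Fin 4 → Fin 4 → ℝ)
    (hT1 : ∀ a b c d, T a b c d = - T b a c d)
    (hD1 : ∀ ν a b c d, D ν a b c d = - D ν b a c d)
    (hD3 : ∀ ν a b c d, D ν a b c d = D ν c d a b)
    (hcyc : ∀ ν a b c d, D ν a b c d + D a b ν c d + D b ν a c d = 0)
    (hJ' : ∀ x y z, (∑ α, eps α * D x α y α z) = ∑ α, eps α * D y α x α z)
    (β lam μ : Fin 4) :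
    ∑ α, eps α * BelD T D α α β lam μ = 0 := by
  have hexp : ∑ α, eps α * BelD T D α α β lam μ
      = (∑ α, eps α * (∑ ρ, ∑ σ, eps ρ * (eps σ *
            (D α α ρ lam σ * T β ρ μ σ + T α ρ lam σ * D α β ρ μ σ))))
        + (∑ α, eps α * (∑ ρ, ∑ σ, eps ρ * (eps σ *
            (D α α ρ μ σ * T β ρ lam σ + T α ρ μ σ * D α β ρ lam σ))))
        - (∑ α, eps α * (1/2 * mink α β * (∑ ρ, ∑ τ, ∑ σ, eps ρ * (eps τ * (eps σ *
            (D α ρ τ lam σ * T ρ τ μ σ + T ρ τ lam σ * D α ρ τ μ σ))))))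
        - (∑ α, eps α * (1/2 * mink lam μ * (∑ ρ, ∑ σ, ∑ τ, eps ρ * (eps σ * (eps τ *
            (D α α ρ σ τ * T β ρ σ τ + T α ρ σ τ * D α β ρ σ τ))))))
        + (∑ α, eps α * (1/8 * mink α β * mink lam μ * (∑ ρ, ∑ τ, ∑ σ, ∑ w,
            eps ρ * (eps τ * (eps σ * (eps w *
            (D α ρ τ σ w * T ρ τ σ w + T ρ τ σ w * D α ρ τ σ w))))))) := by
    simp only [← Finset.sum_add_distrib, ← Finset.sum_sub_distrib]
    refine Finset.sum_congr rfl fun α _ => ?_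
    simp only [BelD]; ring
  rw [hexp, H1 T D hT1 hD1 hD3 hcyc hJ' β lam μ, H1 T D hT1 hD1 hD3 hcyc hJ' β μ lam,
    H3 T D β lam μ, H4 T D hT1 hD1 hD3 hcyc hJ' β lam μ, H5 T D β lam μ]
  ring


section belderiv

variable {R : (Fin 4 → ℝ) → Fin 4 → Fin 4 → Fin 4 → Fin 4 → ℝ} {p : Fin 4 → ℝ}

lemma Bel_funext (a b c d : Fin 4) :
    (fun q => Bel (R q) a b c d) = fun q =>
      (∑ ρ, ∑ σ, eps ρ * (eps σ * (R q a ρ c σ * R q b ρ d σ)))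
    + (∑ ρ, ∑ σ, eps ρ * (eps σ * (R q a ρ d σ * R q b ρ c σ)))
    - 1/2 * mink a b * (∑ ρ, ∑ τ, ∑ σ, eps ρ * (eps τ * (eps σ * (R q ρ τ c σ * R q ρ τ d σ))))
    - 1/2 * mink c d * (∑ ρ, ∑ σ, ∑ τ, eps ρ * (eps σ * (eps τ * (R q a ρ σ τ * R q b ρ σ τ))))
    + 1/8 * mink a b * mink c d * (∑ ρ, ∑ τ, ∑ σ, ∑ w,
        eps ρ * (eps τ * (eps σ * (eps w * (R q ρ τ σ w * R q ρ τ σ w))))) :=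
  funext fun q => Bel_eps (R q) a b c d

lemma dBel (hd : ∀ a b c d, DifferentiableAt ℝ (fun q => R q a b c d) p) (a b c d : Fin 4) :
    DifferentiableAt ℝ (fun q => Bel (R q) a b c d) p := by
  rw [Bel_funext a b c d]
  exact ((((dA2 (fun i j q => R q a i c j) (fun i j q => R q b i d j)
        (fun i j => hd a i c j) (fun i j => hd b i d j)).add
      (dA2 (fun i j q => R q a i d j) (fun i j q => R q b i c j)
        (fun i j => hd a i d j) (fun i j => hd b i c j))).sub
      ((dA3 (fun i j k q => R q i j c k) (fun i j k q => R q i j d k)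
        (fun i j k => hd i j c k) (fun i j k => hd i j d k)).const_mul (1/2 * mink a b))).sub
      ((dA3 (fun i j k q => R q a i j k) (fun i j k q => R q b i j k)
        (fun i j k => hd a i j k) (fun i j k => hd b i j k)).const_mul (1/2 * mink c d))).add
      ((dA4 (fun i j k l q => R q i j k l) (fun i j k l q => R q i j k l)
        (fun i j k l => hd i j k l) (fun i j k l => hd i j k l)).const_mul
        (1/8 * mink a b * mink c d))

lemma pd_Bel (hd : ∀ a b c d, DifferentiableAt ℝ (fun q => R q a b c d) p)
    (ν a b c d : Fin 4) :
    pd ν (fun q => Bel (R q) a b c d) p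
      = BelD (R p) (fun w a b c d => pd w (fun q => R q a b c d) p) ν a b c d := by
  have hA := dA2 (p := p) (fun i j q => R q a i c j) (fun i j q => R q b i d j)
    (fun i j => hd a i c j) (fun i j => hd b i d j)
  have hB := dA2 (p := p) (fun i j q => R q a i d j) (fun i j q => R q b i c j)
    (fun i j => hd a i d j) (fun i j => hd b i c j)
  have hC3 := dA3 (p := p) (fun i j k q => R q i j c k) (fun i j k q => R q i j d k)
    (fun i j k => hd i j c k) (fun i j k => hd i j d k)
  have hD3' := dA3 (p := p) (fun i j k q => R q a i j k) (fun i j k q => R q b i j k)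
    (fun i j k => hd a i j k) (fun i j k => hd b i j k)
  have hE4 := dA4 (p := p) (fun i j k l q => R q i j k l) (fun i j k l q => R q i j k l)
    (fun i j k l => hd i j k l) (fun i j k l => hd i j k l)
  have hC := hC3.const_mul (1/2 * mink a b)
  have hD' := hD3'.const_mul (1/2 * mink c d)
  have hE := hE4.const_mul (1/8 * mink a b * mink c d)
  rw [Bel_funext a b c d]
  rw [pd_add ν (((hA.fun_add hB).fun_sub hC).fun_sub hD') hE,
    pd_sub ν ((hA.fun_add hB).fun_sub hC) hD',
    pd_sub ν (hA.fun_add hB) hC,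
    pd_add ν hA hB,
    pd_const_mul ν (1/2 * mink a b) hC3,
    pd_const_mul ν (1/2 * mink c d) hD3',
    pd_const_mul ν (1/8 * mink a b * mink c d) hE4,
    pdA2 ν (fun i j q => R q a i c j) (fun i j q => R q b i d j)
      (fun i j => hd a i c j) (fun i j => hd b i d j),
    pdA2 ν (fun i j q => R q a i d j) (fun i j q => R q b i c j)
      (fun i j => hd a i d j) (fun i j => hd b i c j),
    pdA3 ν (fun i j k q => R q i j c k) (fun i j k q => R q i j d k)
      (fun i j k => hd i j c k) (fun i j k => hd i j d k),
    pdA3 ν (fun i j k q => R q a i j k) (fun i j k q => R q b i j k)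
      (fun i j k => hd a i j k) (fun i j k => hd b i j k),
    pdA4 ν (fun i j k l q => R q i j k l) (fun i j k l q => R q i j k l)
      (fun i j k l => hd i j k l) (fun i j k l => hd i j k l)]
  simp only [BelD]

end belderiv


/-- on Minkowski ℝ⁴, if a smooth (0,4)-tensor field `R` with the
Riemann symmetries satisfies the second Bianchi identity and its matter current
`J_{λμβ} = ∂_λ Ric_{μβ} − ∂_μ Ric_{λβ}` vanishes identically
(`Ric_{μβ} = η^{αλ} R_{αμλβ}`), then its Bel tensor is divergence-free:
`∂_α B^{αβλμ} = 0` everywhere. -/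
theorem bel_divergence_free_of_matJ_zero
    (R : (Fin 4 → ℝ) → Fin 4 → Fin 4 → Fin 4 → Fin 4 → ℝ)
    (hRsmooth : ∀ α β lam μ, ContDiff ℝ (⊤ : ℕ∞) fun p => R p α β lam μ)
    (hRsym : ∀ p, RiemannSym (R p))
    (hBianchi : SecondBianchi R)
    (hJ : ∀ p lam μ β, matJ R p lam μ β = 0) :
    ∀ p β lam μ, divBel R p β lam μ = 0 := by
  intro p β lam μ
  have hd : ∀ a b c d, DifferentiableAt ℝ (fun q => R q a b c d) p := fun a b c d =>
    ((hRsmooth a b c d).differentiable (by simp)).differentiableAt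
  have hT1 : ∀ a b c d, R p a b c d = - R p b a c d := (hRsym p).1
  have hD1 : ∀ w a b c d, pd w (fun q => R q a b c d) p = - pd w (fun q => R q b a c d) p := by
    intro w a b c d
    have h : (fun q => R q a b c d) = fun q => -(R q b a c d) :=
      funext fun q => (hRsym q).1 a b c d
    rw [h, pd_neg]
  have hD3 : ∀ w a b c d, pd w (fun q => R q a b c d) p = pd w (fun q => R q c d a b) p := by
    intro w a b c d
    have h : (fun q => R q a b c d) = fun q => R q c d a b :=
      funext fun q => (hRsym q).2.2.1 a b c d
    rw [h]
  have hcyc : ∀ w a b c d, pd w (fun q => R q a b c d) p + pd a (fun q => R q b w c d) p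
      + pd b (fun q => R q w a c d) p = 0 := by
    intro w a b c d
    linear_combination (3:ℝ) * hBianchi p w a b c d
      + (1/2 : ℝ) * (hD1 w b a c d + hD1 a w b c d + hD1 b a w c d)
  have hric : ∀ (w u v : Fin 4), pd w (fun q => ricci R q u v) p
      = ∑ α, eps α * pd w (fun q => R q α u α v) p := by
    intro w u v
    have h1 : (fun q => ricci R q u v) = fun q => ∑ α, eps α * R q α u α v := by
      funext q
      simp only [ricci]
      exact Finset.sum_congr rfl fun α _ => sum_mink α (fun l => R q α u l v)
    rw [h1, pd_sum Finset.univ (fun i q => eps i * R q i u i v) w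
      (fun i _ => (hd i u i v).const_mul (eps i))]
    exact Finset.sum_congr rfl fun i _ => pd_const_mul w (eps i) (hd i u i v)
  have hJ' : ∀ x y z, (∑ α, eps α * pd x (fun q => R q α y α z) p)
      = ∑ α, eps α * pd y (fun q => R q α x α z) p := by
    intro x y z
    have h0 := hJ p x y z
    simp only [matJ] at h0
    rw [hric x y z, hric y x z] at h0
    linarith
  have hbel : ∀ α : Fin 4, (fun q => belUp R q α β lam μ)
      = fun q => (eps α * eps β * eps lam * eps μ) * Bel (R q) α β lam μ := by
    intro α
    funext q
    simp only [belUp]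
    rw [col4 α β lam μ (fun i j k l => Bel (R q) i j k l)]
    ring
  have hcore := core_zero (R p) (fun w a b c d => pd w (fun q => R q a b c d) p)
    hT1 hD1 hD3 hcyc hJ' β lam μ
  calc divBel R p β lam μ
      = ∑ α, (eps β * eps lam * eps μ) *
          (eps α * BelD (R p) (fun w a b c d => pd w (fun q => R q a b c d) p) α α β lam μ) := by
        simp only [divBel]
        refine Finset.sum_congr rfl fun α _ => ?_
        rw [hbel α, pd_const_mul α (eps α * eps β * eps lam * eps μ) (dBel hd α β lam μ),
          pd_Bel hd α α β lam μ]
        ring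
    _ = (eps β * eps lam * eps μ) * ∑ α, eps α *
          BelD (R p) (fun w a b c d => pd w (fun q => R q a b c d) p) α α β lam μ :=
        (Finset.mul_sum _ _ _).symm
    _ = 0 := by rw [hcore]; ring
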